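/- Let Ω ⊂ ℝ^N be bounded open, s ∈ (0,1), ε₀ ∈ (0, 1-s). Then for all u ∈ H^{s+ε₀}(Ω) and v ∈ H^s(Ω), ∬_{Ω×Ω} |u(x)-u(y)| |v(x)-v(y)| |log|x-y|| / |x-y|^{N+2s} dx dy ≤ (1/(e ε₀)) ( |u|²_{H^{s+ε₀}(Ω)} + d_Ω^{2ε₀} |u|²_{H^s(Ω)} )^{1/2} |v|_{H^s(Ω)}. -/

import Mathlib

open scoped ENNReal
open MeasureTheory

noncomputable def gagliardo8 (N : ℕ) (Ω : Set (EuclideanSpace ℝ (Fin N))) (t : ℝ)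
    (u : EuclideanSpace ℝ (Fin N) → ℝ) : ℝ≥0∞ :=
  ∫⁻ x in Ω, ∫⁻ y in Ω, ENNReal.ofReal ((u x - u y) ^ 2 / ‖x - y‖ ^ ((N : ℝ) + 2 * t))

/-! Write the integrand as the product of `|u x - u y| |log ‖x - y‖| ‖x - y‖ ^ (-(N + 2s)/2)` and
`|v x - v y| ‖x - y‖ ^ (-(N + 2s)/2)` and apply Cauchy–Schwarz on `Ω × Ω`. Applying `log r ≤ r / e`
to `r = t ^ (± ε₀)` gives `|log t|² ≤ (e ε₀)⁻² (t ^ (-2ε₀) + t ^ (2ε₀))`, and on `Ω × Ω` one has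
`t ^ (2ε₀) ≤ d_Ω ^ (2ε₀)`, which bounds the square of the first factor by the two seminorms of `u`. -/

namespace Real

theorem log_le_rpow_div_exp_one_mul {x ε : ℝ} (hx : 0 < x) (hε : 0 < ε) :
    log x ≤ x ^ ε / (exp 1 * ε) := by
  have h := log_le_sub_one_of_pos (x := x ^ ε / exp 1) (by positivity)
  rw [log_div (by positivity) (exp_pos 1).ne', log_exp, log_rpow hx] at h
  have h' : ε * log x * exp 1 ≤ x ^ ε := by rw [← le_div_iff₀ (exp_pos 1)]; linarith
  rw [le_div_iff₀ (by positivity)]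
  linarith

theorem sq_log_le_rpow_add_rpow {t ε : ℝ} (ht : 0 < t) (hε : 0 < ε) :
    log t ^ 2 ≤ (1 / (exp 1 * ε)) ^ 2 * (t ^ (-(2 * ε)) + t ^ (2 * ε)) := by
  have hup := log_le_rpow_div_exp_one_mul ht hε
  have hlow : -log t ≤ t ^ (-ε) / (exp 1 * ε) := by
    simpa [log_inv, inv_rpow ht.le, rpow_neg ht.le] using
      log_le_rpow_div_exp_one_mul (inv_pos.2 ht) hε
  have sq_rpow (y : ℝ) : (t ^ y) ^ 2 = t ^ (2 * y) := by
    rw [← rpow_natCast, ← rpow_mul ht.le]; ring_nf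
  calc log t ^ 2 ≤ (t ^ ε / (exp 1 * ε)) ^ 2 + (t ^ (-ε) / (exp 1 * ε)) ^ 2 := by
        rcases le_total 0 (log t) with h | h
        · nlinarith [pow_le_pow_left₀ h hup 2, sq_nonneg (t ^ (-ε) / (exp 1 * ε))]
        · nlinarith [pow_le_pow_left₀ (neg_nonneg.2 h) hlow 2, sq_nonneg (t ^ ε / (exp 1 * ε))]
    _ = (1 / (exp 1 * ε)) ^ 2 * (t ^ (-(2 * ε)) + t ^ (2 * ε)) := by
        rw [div_pow, div_pow, sq_rpow, sq_rpow]; ring_nf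

theorem sq_mul_abs_log_div_rpow_le {x y t d a ε : ℝ} (ht : 0 < t) (htd : t ≤ d) (hε : 0 < ε) :
    (|x| * |y| * |log t| / t ^ a) ^ 2 ≤
      (1 / (exp 1 * ε)) ^ 2 *
        ((x ^ 2 / t ^ (a + 2 * ε) + d ^ (2 * ε) * (x ^ 2 / t ^ a)) * (y ^ 2 / t ^ a)) := by
  set K := x ^ 2 * y ^ 2 / (t ^ a) ^ 2
  have hK : 0 ≤ K := by positivity
  calc (|x| * |y| * |log t| / t ^ a) ^ 2 = K * log t ^ 2 := by
        simp only [K, div_pow, mul_pow, sq_abs]; ring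
    _ ≤ K * ((1 / (exp 1 * ε)) ^ 2 * (t ^ (-(2 * ε)) + t ^ (2 * ε))) := by
        gcongr; exact sq_log_le_rpow_add_rpow ht hε
    _ ≤ K * ((1 / (exp 1 * ε)) ^ 2 * (t ^ (-(2 * ε)) + d ^ (2 * ε))) := by
        gcongr
    _ = _ := by
        have : 0 < t ^ a := by positivity
        have : 0 < t ^ (2 * ε) := by positivity
        simp only [K]
        rw [rpow_add ht, rpow_neg ht.le]
        field_simp

end Real

namespace ENNReal

theorem lintegral_le_mul_rpow_mul_rpow_of_sq_le {β : Type*} [MeasurableSpace β] {ν : Measure β}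
    {I A B : β → ℝ≥0∞} (C : ℝ≥0∞) (hA : AEMeasurable A ν) (hB : AEMeasurable B ν)
    (h : ∀ᵐ p ∂ν, I p ^ 2 ≤ C ^ 2 * (A p * B p)) :
    ∫⁻ p, I p ∂ν ≤ C * (∫⁻ p, A p ∂ν) ^ (1 / 2 : ℝ) * (∫⁻ p, B p ∂ν) ^ (1 / 2 : ℝ) := by
  have hpt : ∀ᵐ p ∂ν, I p ≤ C * (A p ^ (1 / 2 : ℝ) * B p ^ (1 / 2 : ℝ)) := by
    filter_upwards [h] with p hp
    have := rpow_le_rpow hp (by norm_num : (0:ℝ) ≤ 1 / 2)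
    rw [mul_rpow_of_nonneg _ _ (by norm_num), mul_rpow_of_nonneg _ _ (by norm_num),
      ← rpow_natCast, ← rpow_natCast, ← rpow_mul, ← rpow_mul] at this
    norm_num at this
    exact this
  calc ∫⁻ p, I p ∂ν ≤ ∫⁻ p, C * (A p ^ (1 / 2 : ℝ) * B p ^ (1 / 2 : ℝ)) ∂ν := lintegral_mono_ae hpt
    _ = C * ∫⁻ p, A p ^ (1 / 2 : ℝ) * B p ^ (1 / 2 : ℝ) ∂ν :=
        lintegral_const_mul'' C ((hA.pow_const _).mul (hB.pow_const _))
    _ ≤ C * ((∫⁻ p, A p ∂ν) ^ (1 / 2 : ℝ) * (∫⁻ p, B p ∂ν) ^ (1 / 2 : ℝ)) := by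
        gcongr
        exact lintegral_mul_norm_pow_le hA hB (by norm_num) (by norm_num) (by norm_num)
    _ = _ := (mul_assoc _ _ _).symm

end ENNReal

theorem lintegral_abs_mul_abs_mul_abs_log_div_rpow_le {β : Type*} [MeasurableSpace β]
    {ν : Measure β} {f g τ : β → ℝ} (hf : Measurable f) (hg : Measurable g) (hτ : Measurable τ)
    {a ε d : ℝ} (hε : 0 < ε) (hτd : ∀ᵐ p ∂ν, 0 ≤ τ p ∧ τ p ≤ d) :
    ∫⁻ p, ENNReal.ofReal (|f p| * |g p| * |Real.log (τ p)| / τ p ^ a) ∂ν ≤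
      ENNReal.ofReal (1 / (Real.exp 1 * ε)) *
        (∫⁻ p, ENNReal.ofReal (f p ^ 2 / τ p ^ (a + 2 * ε)) ∂ν +
          ENNReal.ofReal (d ^ (2 * ε)) * ∫⁻ p, ENNReal.ofReal (f p ^ 2 / τ p ^ a) ∂ν) ^ (1 / 2 : ℝ) *
        (∫⁻ p, ENNReal.ofReal (g p ^ 2 / τ p ^ a) ∂ν) ^ (1 / 2 : ℝ) := by
  rw [← lintegral_const_mul _ (by fun_prop), ← lintegral_add_left (by fun_prop)]
  refine ENNReal.lintegral_le_mul_rpow_mul_rpow_of_sq_le _ (by fun_prop) (by fun_prop) ?_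
  filter_upwards [hτd] with p ⟨hτ0, hτd⟩
  rcases hτ0.eq_or_lt with h0 | hpos
  · -- `Real.log 0 = 0` makes the integrand vanish where `τ p = 0`
    simp [← h0]
  have hd : 0 ≤ d := hτ0.trans hτd
  rw [← ENNReal.ofReal_pow (by positivity), ← ENNReal.ofReal_mul (by positivity),
    ← ENNReal.ofReal_add (by positivity) (by positivity), ← ENNReal.ofReal_mul (by positivity),
    ← ENNReal.ofReal_pow (by positivity), ← ENNReal.ofReal_mul (by positivity)]
  exact ENNReal.ofReal_le_ofReal (Real.sq_mul_abs_log_div_rpow_le hpos hτd hε)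

theorem ae_dist_le_diam_restrict_prod {α : Type*} [PseudoMetricSpace α] [MeasurableSpace α]
    [OpensMeasurableSpace α] [SecondCountableTopology α] (μ : Measure α) [SFinite μ] {s : Set α}
    (hs : Bornology.IsBounded s) :
    ∀ᵐ p ∂(μ.restrict s).prod (μ.restrict s), dist p.1 p.2 ≤ Metric.diam s := by
  -- `s` need not be measurable, but its closure is, and it has the same diameter
  have hmem : ∀ᵐ p ∂(μ.restrict s).prod (μ.restrict s), p ∈ closure (s ×ˢ s) := by
    rw [Measure.prod_restrict]
    exact ae_restrict_of_ae_restrict_of_subset subset_closure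
      (ae_restrict_mem isClosed_closure.measurableSet)
  filter_upwards [hmem] with p hp
  rw [closure_prod_eq] at hp
  rw [← Metric.diam_closure]
  exact Metric.dist_le_diam_of_mem hs.closure hp.1 hp.2

theorem gagliardo8_eq_lintegral_prod {N : ℕ} {Ω : Set (EuclideanSpace ℝ (Fin N))} {t : ℝ}
    {u : EuclideanSpace ℝ (Fin N) → ℝ} (hu : Measurable u) :
    gagliardo8 N Ω t u =
      ∫⁻ p, ENNReal.ofReal ((u p.1 - u p.2) ^ 2 / ‖p.1 - p.2‖ ^ ((N : ℝ) + 2 * t))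
        ∂(volume.restrict Ω).prod (volume.restrict Ω) := by
  rw [lintegral_prod _ (by fun_prop)]
  rfl

theorem stmt8_general (N : ℕ) (Ω : Set (EuclideanSpace ℝ (Fin N)))
    (hΩb : Bornology.IsBounded Ω) (s ε₀ : ℝ)
    (hε₀ : ε₀ ∈ Set.Ioo (0 : ℝ) (1 - s))
    (u v : EuclideanSpace ℝ (Fin N) → ℝ) (hu : Measurable u) (hv : Measurable v) :
    (∫⁻ x in Ω, ∫⁻ y in Ω, ENNReal.ofReal
        (|u x - u y| * |v x - v y| * |Real.log ‖x - y‖| / ‖x - y‖ ^ ((N : ℝ) + 2 * s))) ≤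
      ENNReal.ofReal (1 / (Real.exp 1 * ε₀)) *
        (gagliardo8 N Ω (s + ε₀) u +
            ENNReal.ofReal ((Metric.diam Ω) ^ (2 * ε₀)) * gagliardo8 N Ω s u) ^ ((1 : ℝ) / 2) *
        (gagliardo8 N Ω s v) ^ ((1 : ℝ) / 2) := by
  have hdist : ∀ᵐ p ∂(volume.restrict Ω).prod (volume.restrict Ω),
      0 ≤ ‖p.1 - p.2‖ ∧ ‖p.1 - p.2‖ ≤ Metric.diam Ω := by
    filter_upwards [ae_dist_le_diam_restrict_prod volume hΩb] with p hp
    exact ⟨norm_nonneg _, dist_eq_norm p.1 p.2 ▸ hp⟩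
  have key := lintegral_abs_mul_abs_mul_abs_log_div_rpow_le (a := (N : ℝ) + 2 * s)
    (f := fun p => u p.1 - u p.2) (g := fun p => v p.1 - v p.2) (by fun_prop) (by fun_prop)
    (by fun_prop) hε₀.1 hdist
  rw [lintegral_prod _ (by fun_prop)] at key
  rw [gagliardo8_eq_lintegral_prod hu, gagliardo8_eq_lintegral_prod hu,
    gagliardo8_eq_lintegral_prod hv, show (N : ℝ) + 2 * (s + ε₀) = (N : ℝ) + 2 * s + 2 * ε₀ by ring]
  exact key

theorem stmt8 (N : ℕ) (Ω : Set (EuclideanSpace ℝ (Fin N))) (hΩo : IsOpen Ω)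
    (hΩb : Bornology.IsBounded Ω) (s ε₀ : ℝ) (hs : s ∈ Set.Ioo (0 : ℝ) 1)
    (hε₀ : ε₀ ∈ Set.Ioo (0 : ℝ) (1 - s))
    (u v : EuclideanSpace ℝ (Fin N) → ℝ) (hu : Measurable u) (hv : Measurable v)
    (huH : gagliardo8 N Ω (s + ε₀) u ≠ ⊤) (huH' : gagliardo8 N Ω s u ≠ ⊤)
    (hvH : gagliardo8 N Ω s v ≠ ⊤) :
    (∫⁻ x in Ω, ∫⁻ y in Ω, ENNReal.ofReal
        (|u x - u y| * |v x - v y| * |Real.log ‖x - y‖| / ‖x - y‖ ^ ((N : ℝ) + 2 * s))) ≤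
      ENNReal.ofReal (1 / (Real.exp 1 * ε₀)) *
        (gagliardo8 N Ω (s + ε₀) u +
            ENNReal.ofReal ((Metric.diam Ω) ^ (2 * ε₀)) * gagliardo8 N Ω s u) ^ ((1 : ℝ) / 2) *
        (gagliardo8 N Ω s v) ^ ((1 : ℝ) / 2) :=
  stmt8_general N Ω hΩb s ε₀ hε₀ u v hu hv
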